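/- arXiv:1805.08241 — 7 statements merged into one kernel-verified Lean document; each statement's English description precedes it below -/
import Mathlib

section
/- Let z ∈ ℝ^J, let u ∈ ℝ^J satisfy u_j ≥ 0 for all j and ∑_{j=1}^J u_j ≥ 1, and let α⋆ be the minimizer of ‖α − z‖² over C(u) = {α ∈ ℝ^J : α ≥ 0, ∑_j α_j = 1, α ≤ u}. Then there exists a constant τ ∈ ℝ such that α⋆_j = max{0, min{u_j, z_j − τ}} for every j ∈ {1, …, J}. -/
/-- The minimizer `α⋆` of `‖α − z‖²` over `C(u)` has the clamped form
`α⋆_j = max {0, min {u_j, z_j − τ}}` for some normalizing constant `τ`. -/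
theorem csparsemax_clamped_form (J : ℕ) (z u : Fin J → ℝ)
    (hu : ∀ j, 0 ≤ u j) (husum : 1 ≤ ∑ j, u j) (α : Fin J → ℝ)
    (hα : (∀ j, 0 ≤ α j) ∧ (∑ j, α j = 1) ∧ (∀ j, α j ≤ u j))
    (hmin : ∀ β : Fin J → ℝ,
      ((∀ j, 0 ≤ β j) ∧ (∑ j, β j = 1) ∧ (∀ j, β j ≤ u j)) →
        ∑ j, (α j - z j) ^ 2 ≤ ∑ j, (β j - z j) ^ 2) :
    ∃ τ : ℝ, ∀ j, α j = max 0 (min (u j) (z j - τ)) := by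
  obtain ⟨hpos, hsum, hub⟩ := hα
  -- key exchange inequality
  have key : ∀ i j, 0 < α i → α j < u j → z j - α j ≤ z i - α i := by
    intro i j hi hj
    rcases eq_or_ne i j with rfl | hij
    · linarith
    by_contra hcon
    push_neg at hcon
    set d := (z j - α j) - (z i - α i) with hd
    have hd0 : 0 < d := by linarith
    set ε := min (min (α i) (u j - α j)) (d / 2) with hε
    have hε0 : 0 < ε := lt_min (lt_min hi (by linarith)) (by linarith)
    have hεi : ε ≤ α i := le_trans (min_le_left _ _) (min_le_left _ _)
    have hεj : ε ≤ u j - α j := le_trans (min_le_left _ _) (min_le_right _ _)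
    have hεd : ε ≤ d / 2 := min_le_right _ _
    set β : Fin J → ℝ :=
      fun k => α k + (if k = j then ε else 0) - (if k = i then ε else 0) with hβ
    have hβi : β i = α i - ε := by simp [hβ, hij]
    have hβj : β j = α j + ε := by simp [hβ, Ne.symm hij]
    have hβk : ∀ k, k ≠ i → k ≠ j → β k = α k := by
      intro k hki hkj; simp [hβ, hki, hkj]
    have hfeas : (∀ k, 0 ≤ β k) ∧ (∑ k, β k = 1) ∧ (∀ k, β k ≤ u k) := by
      refine ⟨?_, ?_, ?_⟩
      · intro k
        by_cases hki : k = i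
        · rw [hki, hβi]; linarith
        by_cases hkj : k = j
        · rw [hkj, hβj]; linarith [hpos j, hε0.le]
        · rw [hβk k hki hkj]; exact hpos k
      · simp [hβ, Finset.sum_add_distrib, Finset.sum_sub_distrib,
          Finset.sum_ite_eq', hsum]
      · intro k
        by_cases hki : k = i
        · rw [hki, hβi]; linarith [hub i]
        by_cases hkj : k = j
        · rw [hkj, hβj]; linarith
        · rw [hβk k hki hkj]; exact hub k
    have hle := hmin β hfeas
    have hsplit : ∑ k, ((β k - z k) ^ 2 - (α k - z k) ^ 2)
        = ((β i - z i) ^ 2 - (α i - z i) ^ 2)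
          + ((β j - z j) ^ 2 - (α j - z j) ^ 2) := by
      rw [← Finset.sum_pair (f := fun k => (β k - z k) ^ 2 - (α k - z k) ^ 2) hij]
      refine (Finset.sum_subset (Finset.subset_univ _) ?_).symm
      intro k _ hk
      simp only [Finset.mem_insert, Finset.mem_singleton, not_or] at hk
      rw [hβk k hk.1 hk.2]; ring
    have hgsum : 0 ≤ ((β i - z i) ^ 2 - (α i - z i) ^ 2)
          + ((β j - z j) ^ 2 - (α j - z j) ^ 2) := by
      rw [← hsplit, Finset.sum_sub_distrib]
      linarith
    rw [hβi, hβj] at hgsum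
    nlinarith [mul_pos hε0 hd0, sq_nonneg ε]
  -- the support is nonempty
  have hA : ∃ i, 0 < α i := by
    by_contra h
    push_neg at h
    have : ∑ j, α j ≤ 0 := Finset.sum_nonpos fun j _ => h j
    linarith
  obtain ⟨i₀, hi₀⟩ := hA
  set A : Finset (Fin J) := Finset.univ.filter (fun i => 0 < α i) with hAdef
  have hi₀A : i₀ ∈ A := by simp [hAdef, hi₀]
  have hAne : ((A.image fun i => z i - α i)).Nonempty :=
    ⟨z i₀ - α i₀, Finset.mem_image_of_mem _ hi₀A⟩
  set τ := (A.image fun i => z i - α i).min' hAne with hτdef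
  -- τ ≤ z i - α i for all i with 0 < α i
  have hτle : ∀ i, 0 < α i → τ ≤ z i - α i := by
    intro i hi
    exact Finset.min'_le _ _ (Finset.mem_image_of_mem _ (by simp [hAdef, hi]))
  -- z j - α j ≤ τ for all j with α j < u j
  have hτge : ∀ j, α j < u j → z j - α j ≤ τ := by
    intro j hj
    obtain ⟨i, hiA, hiv⟩ := Finset.mem_image.mp (Finset.min'_mem _ hAne)
    have hi : 0 < α i := (Finset.mem_filter.mp hiA).2
    rw [hτdef, ← hiv]
    exact key i j hi hj
  refine ⟨τ, fun j => ?_⟩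
  rcases lt_or_eq_of_le (hub j) with h1 | h1
  · rcases lt_or_eq_of_le (hpos j) with h0 | h0
    · -- interior: α j = z j - τ
      have e1 : τ ≤ z j - α j := hτle j h0
      have e2 : z j - α j ≤ τ := hτge j h1
      have : z j - τ = α j := by linarith
      rw [min_eq_right (by linarith), this, max_eq_right h0.le]
    · -- α j = 0
      have e2 : z j - α j ≤ τ := hτge j h1
      have : min (u j) (z j - τ) ≤ 0 := (min_le_right _ _).trans (by linarith)
      rw [max_eq_left this, ← h0]
  · -- α j = u j
    rcases lt_or_eq_of_le (hpos j) with h0 | h0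
    · have e1 : τ ≤ z j - α j := hτle j h0
      rw [min_eq_left (by linarith), max_eq_right (hu j), h1]
    · -- α j = u j = 0
      have : min (u j) (z j - τ) ≤ 0 := (min_le_left _ _).trans (by rw [← h1, ← h0])
      rw [max_eq_left this, ← h0]
end

section
/- Let z ∈ ℝ^J, let u ∈ ℝ^J satisfy u_j ≥ 0 for all j, let τ ∈ ℝ, and define α ∈ ℝ^J by α_j = max{0, min{u_j, z_j − τ}}. If ∑_{j=1}^J α_j = 1, then α is a minimizer of ‖β − z‖² over C(u) = {β ∈ ℝ^J : β ≥ 0, ∑_j β_j = 1, β ≤ u}; that is, ‖α − z‖² ≤ ‖β − z‖² for all β ∈ C(u). -/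
/-- If the clamped vector `α_j = max {0, min {u_j, z_j − τ}}` sums to 1, then it
minimizes `‖β − z‖²` over `C(u) = {β : β ≥ 0, ∑ β = 1, β ≤ u}`. -/
theorem clamped_form_is_minimizer (J : ℕ) (z u : Fin J → ℝ)
    (hu : ∀ j, 0 ≤ u j) (τ : ℝ) (α : Fin J → ℝ)
    (hα : ∀ j, α j = max 0 (min (u j) (z j - τ)))
    (hsum : ∑ j, α j = 1) :
    ∀ β : Fin J → ℝ, ((∀ j, 0 ≤ β j) ∧ (∑ j, β j = 1) ∧ (∀ j, β j ≤ u j)) →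
      ∑ j, (α j - z j) ^ 2 ≤ ∑ j, (β j - z j) ^ 2 := by
  rintro β ⟨hb0, hb1, hbu⟩
  have key : ∀ j, (z j - τ - α j) * (β j - α j) ≤ 0 := by
    intro j
    rcases le_total (z j - τ) 0 with h | h
    · have ha : α j = 0 := by
        rw [hα j]
        exact max_eq_left ((min_le_right _ _).trans h)
      rw [ha]
      simpa using mul_nonpos_of_nonpos_of_nonneg (by linarith) (by simpa using hb0 j)
    · rcases le_total (u j) (z j - τ) with h2 | h2
      · have ha : α j = u j := by
          rw [hα j, min_eq_left h2, max_eq_right (hu j)]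
        rw [ha]
        exact mul_nonpos_of_nonneg_of_nonpos (by linarith) (by linarith [hbu j])
      · have ha : α j = z j - τ := by
          rw [hα j, min_eq_right h2, max_eq_right h]
        rw [ha]
        simp
  have sum_diff : ∑ j, (β j - α j) = 0 := by
    rw [Finset.sum_sub_distrib, hb1, hsum]; ring
  have expand : ∑ j, (β j - z j) ^ 2 - ∑ j, (α j - z j) ^ 2 =
      (∑ j, ((β j - α j) ^ 2 - 2 * ((z j - τ - α j) * (β j - α j))))
        - 2 * τ * ∑ j, (β j - α j) := by
    rw [Finset.mul_sum, ← Finset.sum_sub_distrib, ← Finset.sum_sub_distrib]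
    apply Finset.sum_congr rfl
    intro j _
    ring
  have nonneg : 0 ≤ ∑ j, ((β j - α j) ^ 2 - 2 * ((z j - τ - α j) * (β j - α j))) := by
    apply Finset.sum_nonneg
    intro j _
    have := key j
    nlinarith [sq_nonneg (β j - α j)]
  have := expand
  rw [sum_diff] at this
  linarith
end

section
/- Let z ∈ ℝ^J, let u ∈ ℝ^J satisfy u_j ≥ 0 for all j and ∑_{j=1}^J u_j ≥ 1, let α⋆ = csparsemax(z; u), and define A = {j : 0 < α⋆_j < u_j} and A_R = {j : α⋆_j = u_j}. If A ≠ ∅ and τ ∈ ℝ is any constant with α⋆_j = max{0, min{u_j, z_j − τ}} for all j, then τ = (∑_{j∈A} z_j + ∑_{j∈A_R} u_j − 1) / |A|. -/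
/-!
On a free coordinate the clamp is the identity, `α_j = z_j - τ`, and every other coordinate is
`0` or `u_j`. Hence `∑ α = 1` becomes the linear equation `∑_A z_j - |A| τ + ∑_{A_R} u_j = 1`,
which determines `τ` because `|A| > 0`.
-/

open Finset

theorem max_zero_min_eq_ite_add_ite {R : Type*} [LinearOrder R] [AddZeroClass R] (b x : R) :
    max 0 (min b x) = (if 0 < max 0 (min b x) ∧ max 0 (min b x) < b then x else 0)
      + (if max 0 (min b x) = b then b else 0) := by
  split_ifs <;> grind [add_zero, zero_add]

theorem sum_eq_sum_free_add_sum_upper {ι R : Type*} [Fintype ι] [AddCommGroup R] [LinearOrder R]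
    {z u α : ι → R} {τ : R} (hτ : ∀ j, α j = max 0 (min (u j) (z j - τ))) :
    ∑ j, α j = ∑ j ∈ univ.filter (fun j => 0 < α j ∧ α j < u j), (z j - τ)
      + ∑ j ∈ univ.filter (fun j => α j = u j), u j := by
  rw [sum_filter, sum_filter, ← sum_add_distrib]
  refine sum_congr rfl fun j _ => ?_
  rw [hτ j]
  exact max_zero_min_eq_ite_add_ite (u j) (z j - τ)

open Finset in
theorem csparsemax_tau_value_general (J : ℕ) (z u : Fin J → ℝ)
    (α : Fin J → ℝ)
    (hα : (∀ j, 0 ≤ α j) ∧ (∑ j, α j = 1) ∧ (∀ j, α j ≤ u j))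
    (hA : (univ.filter (fun j => 0 < α j ∧ α j < u j)).Nonempty)
    (τ : ℝ) (hτ : ∀ j, α j = max 0 (min (u j) (z j - τ))) :
    τ = ((∑ j ∈ univ.filter (fun j => 0 < α j ∧ α j < u j), z j)
          + (∑ j ∈ univ.filter (fun j => α j = u j), u j) - 1)
        / (univ.filter (fun j => 0 < α j ∧ α j < u j)).card := by
  obtain ⟨-, hsum, -⟩ := hα
  have hsplit := sum_eq_sum_free_add_sum_upper hτ
  rw [hsum, sum_sub_distrib, sum_const, nsmul_eq_mul] at hsplit
  have hcard : ((univ.filter (fun j => 0 < α j ∧ α j < u j)).card : ℝ) ≠ 0 :=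
    Nat.cast_ne_zero.mpr hA.card_pos.ne'
  field_simp
  linarith

open Finset in
/-- If `α⋆ = csparsemax(z; u)` has a nonempty set of free coordinates
`A = {j : 0 < α⋆_j < u_j}` and `τ` is a constant realizing the clamped form,
then `τ = (∑_{j∈A} z_j + ∑_{j∈A_R} u_j − 1) / |A|`. -/
theorem csparsemax_tau_value (J : ℕ) (z u : Fin J → ℝ)
    (hu : ∀ j, 0 ≤ u j) (husum : 1 ≤ ∑ j, u j) (α : Fin J → ℝ)
    (hα : (∀ j, 0 ≤ α j) ∧ (∑ j, α j = 1) ∧ (∀ j, α j ≤ u j))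
    (hmin : ∀ β : Fin J → ℝ,
      ((∀ j, 0 ≤ β j) ∧ (∑ j, β j = 1) ∧ (∀ j, β j ≤ u j)) →
        ∑ j, (α j - z j) ^ 2 ≤ ∑ j, (β j - z j) ^ 2)
    (hA : (univ.filter (fun j => 0 < α j ∧ α j < u j)).Nonempty)
    (τ : ℝ) (hτ : ∀ j, α j = max 0 (min (u j) (z j - τ))) :
    τ = ((∑ j ∈ univ.filter (fun j => 0 < α j ∧ α j < u j), z j)
          + (∑ j ∈ univ.filter (fun j => α j = u j), u j) - 1)
        / (univ.filter (fun j => 0 < α j ∧ α j < u j)).card :=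
  csparsemax_tau_value_general J z u α hα hA τ hτ
end

section
/- Let z ∈ ℝ^J and let u ∈ ℝ^J satisfy u_j ≥ 0 for all j and ∑_{j=1}^J u_j ≥ 1. Define φ : ℝ → ℝ by φ(τ) = ∑_{j=1}^J max{0, min{u_j, z_j − τ}}. Then φ is continuous and monotonically nonincreasing, and there exists τ ∈ ℝ with φ(τ) = 1. -/
/-- The function `φ(τ) = ∑_j max {0, min {u_j, z_j − τ}}` is continuous and
nonincreasing, and attains the value 1 when `u ≥ 0` and `∑ j, u j ≥ 1`. -/
theorem clamp_sum_continuous_antitone_attains_one (J : ℕ) (z u : Fin J → ℝ)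
    (hu : ∀ j, 0 ≤ u j) (husum : 1 ≤ ∑ j, u j) :
    Continuous (fun τ : ℝ => ∑ j, max 0 (min (u j) (z j - τ))) ∧
    Antitone (fun τ : ℝ => ∑ j, max 0 (min (u j) (z j - τ))) ∧
    ∃ τ : ℝ, ∑ j, max 0 (min (u j) (z j - τ)) = 1 := by
  have hcont : Continuous (fun τ : ℝ => ∑ j, max 0 (min (u j) (z j - τ))) := by
    apply continuous_finset_sum
    intro j _
    exact continuous_const.max ((continuous_const.min (continuous_const.sub continuous_id)))
  have hanti : Antitone (fun τ : ℝ => ∑ j, max 0 (min (u j) (z j - τ))) := by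
    intro s t hst
    apply Finset.sum_le_sum
    intro j _
    exact max_le_max le_rfl (min_le_min le_rfl (by linarith))
  refine ⟨hcont, hanti, ?_⟩
  rcases Nat.eq_zero_or_pos J with hJ | hJ
  · exfalso
    subst hJ
    simp at husum
    linarith
  have hne : (Finset.univ : Finset (Fin J)).Nonempty := Finset.univ_nonempty_iff.mpr ⟨⟨0, hJ⟩⟩
  set a : ℝ := Finset.univ.inf' hne (fun j => z j - u j) with ha
  set b : ℝ := Finset.univ.sup' hne z with hb
  have hab : a ≤ b := by
    obtain ⟨j, _, hj⟩ := Finset.exists_mem_eq_inf' hne (fun j => z j - u j)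
    calc a = z j - u j := hj
      _ ≤ z j := by linarith [hu j]
      _ ≤ b := Finset.le_sup' z (Finset.mem_univ j)
  have hfa : (1 : ℝ) ≤ ∑ j, max 0 (min (u j) (z j - a)) := by
    refine le_trans husum (Finset.sum_le_sum fun j _ => ?_)
    have h1 : a ≤ z j - u j := Finset.inf'_le _ (Finset.mem_univ j)
    have : min (u j) (z j - a) = u j := min_eq_left (by linarith)
    rw [this]
    exact le_max_right _ _
  have hfb : ∑ j, max 0 (min (u j) (z j - b)) ≤ 1 := by
    have : ∑ j, max 0 (min (u j) (z j - b)) = 0 := by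
      apply Finset.sum_eq_zero
      intro j _
      have h1 : z j ≤ b := Finset.le_sup' z (Finset.mem_univ j)
      have h2 : min (u j) (z j - b) ≤ 0 := le_trans (min_le_right _ _) (by linarith)
      exact max_eq_left h2
    linarith
  have := intermediate_value_Icc' hab hcont.continuousOn
  have hmem : (1 : ℝ) ∈ Set.Icc ((fun τ : ℝ => ∑ j, max 0 (min (u j) (z j - τ))) b)
      ((fun τ : ℝ => ∑ j, max 0 (min (u j) (z j - τ))) a) := ⟨hfb, hfa⟩
  obtain ⟨τ, _, hτ⟩ := this hmem
  exact ⟨τ, hτ⟩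
end

section
/- Let z ∈ ℝ^J and let u ∈ ℝ^J satisfy u_j ≥ 0 for all j. If τ, τ' ∈ ℝ both satisfy ∑_{j=1}^J max{0, min{u_j, z_j − τ}} = 1 and ∑_{j=1}^J max{0, min{u_j, z_j − τ'}} = 1, then max{0, min{u_j, z_j − τ}} = max{0, min{u_j, z_j − τ'}} for every j ∈ {1, …, J}; that is, the clamped solution vector is independent of the choice of normalizing constant. -/
lemma clamp_mono (u z : ℝ) {a b : ℝ} (h : a ≤ b) :
    max 0 (min u (z - b)) ≤ max 0 (min u (z - a)) := by
  apply max_le_max le_rfl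
  apply min_le_min le_rfl
  linarith

/-- If two normalizing constants `τ, τ'` both make the clamped vector
`j ↦ max {0, min {u_j, z_j − τ}}` sum to 1, then the clamped vectors coincide. -/
theorem clamped_solution_unique (J : ℕ) (z u : Fin J → ℝ)
    (hu : ∀ j, 0 ≤ u j) (τ τ' : ℝ)
    (hτ : ∑ j, max 0 (min (u j) (z j - τ)) = 1)
    (hτ' : ∑ j, max 0 (min (u j) (z j - τ')) = 1) :
    ∀ j, max 0 (min (u j) (z j - τ)) = max 0 (min (u j) (z j - τ')) := by
  rcases le_total τ τ' with h | h
  · have hle : ∀ j ∈ Finset.univ, max 0 (min (u j) (z j - τ')) ≤ max 0 (min (u j) (z j - τ)) :=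
      fun j _ => clamp_mono (u j) (z j) h
    have := (Finset.sum_eq_sum_iff_of_le hle).mp (hτ'.trans hτ.symm)
    exact fun j => (this j (Finset.mem_univ j)).symm
  · have hle : ∀ j ∈ Finset.univ, max 0 (min (u j) (z j - τ)) ≤ max 0 (min (u j) (z j - τ')) :=
      fun j _ => clamp_mono (u j) (z j) h
    have := (Finset.sum_eq_sum_iff_of_le hle).mp (hτ.trans hτ'.symm)
    exact fun j => this j (Finset.mem_univ j)
end

section
/- Let {1, …, J} be partitioned into disjoint sets A_L, A, A_R with A ≠ ∅, let F be defined by F_i(z, u) = 0 for i ∈ A_L, F_i(z, u) = z_i − (∑_{j∈A} z_j + ∑_{j∈A_R} u_j − 1)/|A| for i ∈ A, and F_i(z, u) = u_i for i ∈ A_R, and let dα ∈ ℝ^J be any vector. Then for every j ∈ {1, …, J}, the adjoint Jacobian–vector product with respect to z satisfies ∑_{i=1}^J (∂F_i/∂z_j)·dα_i = 𝟙(j ∈ A)·(dα_j − m), where m = (1/|A|) ∑_{i∈A} dα_i and 𝟙 denotes the indicator. -/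
open Finset

/-!
On a region with fixed active sets, `F z u` is `z` centred on `A` (zero off `A`) plus a term that
depends only on `u`. So the Jacobian in `z` is the orthogonal projection onto
`{v | supp v ⊆ A, ∑ v = 0}`, which is self-adjoint, and backpropagating `dα` returns its projection.
-/

variable {ι : Type*} [DecidableEq ι]

noncomputable def centerOn (A : Finset ι) (v : ι → ℝ) (i : ι) : ℝ :=
  if i ∈ A then v i - (∑ k ∈ A, v k) / #A else 0

theorem sum_centerOn_mul [Fintype ι] (A : Finset ι) (v w : ι → ℝ) :
    ∑ i, centerOn A v i * w i = ∑ i ∈ A, v i * w i - (∑ i ∈ A, v i) * (∑ i ∈ A, w i) / #A := by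
  simp only [centerOn, ite_mul, zero_mul, sum_ite_mem, univ_inter, sub_mul, sum_sub_distrib]
  rw [← mul_sum, div_mul_eq_mul_div]

theorem sum_centerOn_mul_comm [Fintype ι] (A : Finset ι) (v w : ι → ℝ) :
    ∑ i, centerOn A v i * w i = ∑ i, v i * centerOn A w i := by
  simp only [mul_comm (v _), sum_centerOn_mul, mul_comm (∑ i ∈ A, v i)]

theorem hasDerivAt_sum_update_mul [Fintype ι] (z w : ι → ℝ) (j : ι) (x : ℝ) :
    HasDerivAt (fun t => ∑ i, Function.update z j t i * w i) (w j) x := by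
  have hupd := hasDerivAt_pi.mp (hasDerivAt_update z j x)
  have hsum := HasDerivAt.fun_sum (u := univ) fun i _ => (hupd i).mul_const (w i)
  simpa [Pi.single_apply] using hsum

theorem apply_eq_centerOn_add {AL A AR : Finset ι} (hLA : Disjoint AL A)
    {F : (ι → ℝ) → (ι → ℝ) → ι → ℝ}
    (hF : ∀ z u i, F z u i =
      if i ∈ AL then 0
      else if i ∈ A then
        z i - ((∑ j ∈ A, z j) + (∑ j ∈ AR, u j) - 1) / (A.card : ℝ)
      else u i) (z u : ι → ℝ) (i : ι) :
    F z u i = centerOn A z i + F 0 u i := by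
  by_cases hiA : i ∈ A
  · have hiL : i ∉ AL := disjoint_right.mp hLA hiA
    simp only [hF, centerOn, if_neg hiL, if_pos hiA, Pi.zero_apply, sum_const_zero]
    ring
  · simp [hF, centerOn, hiA]

open Finset in
theorem csparsemax_backprop_z_general (J : ℕ) (AL A AR : Finset (Fin J))
    (hLA : Disjoint AL A)
    (F : (Fin J → ℝ) → (Fin J → ℝ) → Fin J → ℝ)
    (hF : ∀ z u i, F z u i =
      if i ∈ AL then 0
      else if i ∈ A then
        z i - ((∑ j ∈ A, z j) + (∑ j ∈ AR, u j) - 1) / (A.card : ℝ)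
      else u i)
    (dα : Fin J → ℝ) (z u : Fin J → ℝ) (j : Fin J) :
    HasDerivAt (fun t : ℝ => ∑ i, F (Function.update z j t) u i * dα i)
      (if j ∈ A then dα j - (∑ i ∈ A, dα i) / (A.card : ℝ) else 0) (z j) := by
  have hsplit : ∀ t, ∑ i, F (Function.update z j t) u i * dα i =
      ∑ i, Function.update z j t i * centerOn A dα i + ∑ i, F 0 u i * dα i := fun t => by
    rw [← sum_centerOn_mul_comm, ← sum_add_distrib]
    exact sum_congr rfl fun i _ => by rw [apply_eq_centerOn_add hLA hF, add_mul]
  simp only [hsplit]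
  exact (hasDerivAt_sum_update_mul z _ j _).add_const _

open Finset in
/-- Adjoint Jacobian–vector product of the local closed form `F` of constrained
sparsemax with respect to `z`: `∑_i (∂F_i/∂z_j)·dα_i = 𝟙(j ∈ A)(dα_j − m)`,
where `m = (1/|A|) ∑_{i∈A} dα_i`. The left-hand side is expressed as the
derivative of `t ↦ ∑_i F_i(update z j t, u) · dα_i` at `z j`. -/
theorem csparsemax_backprop_z (J : ℕ) (AL A AR : Finset (Fin J))
    (hLA : Disjoint AL A) (hLR : Disjoint AL AR) (hAR : Disjoint A AR)
    (hcover : AL ∪ A ∪ AR = Finset.univ) (hA : A.Nonempty)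
    (F : (Fin J → ℝ) → (Fin J → ℝ) → Fin J → ℝ)
    (hF : ∀ z u i, F z u i =
      if i ∈ AL then 0
      else if i ∈ A then
        z i - ((∑ j ∈ A, z j) + (∑ j ∈ AR, u j) - 1) / (A.card : ℝ)
      else u i)
    (dα : Fin J → ℝ) (z u : Fin J → ℝ) (j : Fin J) :
    HasDerivAt (fun t : ℝ => ∑ i, F (Function.update z j t) u i * dα i)
      (if j ∈ A then dα j - (∑ i ∈ A, dα i) / (A.card : ℝ) else 0) (z j) :=
  csparsemax_backprop_z_general J AL A AR hLA F hF dα z u j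
end

section
/- Let J ≥ 1, let a, b ∈ ℝ^J with a_j ≤ b_j for all j, let c ∈ ℝ^J with c_j > 0 for all j, and let d ∈ ℝ satisfy ∑_{j=1}^J c_j a_j ≤ d ≤ ∑_{j=1}^J c_j b_j. Then the problem of minimizing ∑_{j=1}^J c_j x_j² subject to ∑_{j=1}^J c_j x_j = d and a_j ≤ x_j ≤ b_j for all j has a solution x⋆, and there exists a constant y ∈ ℝ such that x⋆_j = max{a_j, min{b_j, y}} for every j. -/
lemma pk_key (a b y z : ℝ) (hab : a ≤ b) (hz1 : a ≤ z) (hz2 : z ≤ b) :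
    0 ≤ (max a (min b y) - y) * (z - max a (min b y)) := by
  rcases le_total y a with h | h
  · rw [min_eq_right (h.trans hab), max_eq_left h]
    have h1 : 0 ≤ a - y := by linarith
    have h2 : 0 ≤ z - a := by linarith
    positivity
  · rcases le_total b y with h' | h'
    · rw [min_eq_left h', max_eq_right hab]
      nlinarith
    · rw [min_eq_right h', max_eq_right h]
      simp

/-- The singly-constrained convex quadratic problem of Pardalos and Kovoor:
minimizing `∑ c_j x_j²` subject to `∑ c_j x_j = d` and `a ≤ x ≤ b`, with
`c_j > 0` and feasibility `∑ c_j a_j ≤ d ≤ ∑ c_j b_j`, has a solution `x⋆`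
of the clamped form `x⋆_j = max {a_j, min {b_j, y}}` for a constant `y`. -/
theorem pardalos_kovoor_solution (J : ℕ) (hJ : 1 ≤ J)
    (a b c : Fin J → ℝ) (d : ℝ)
    (hab : ∀ j, a j ≤ b j) (hc : ∀ j, 0 < c j)
    (hd₁ : ∑ j, c j * a j ≤ d) (hd₂ : d ≤ ∑ j, c j * b j) :
    ∃ x : Fin J → ℝ,
      ((∑ j, c j * x j = d) ∧ ∀ j, a j ≤ x j ∧ x j ≤ b j) ∧
      (∀ y : Fin J → ℝ,
        ((∑ j, c j * y j = d) ∧ ∀ j, a j ≤ y j ∧ y j ≤ b j) →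
          ∑ j, c j * (x j) ^ 2 ≤ ∑ j, c j * (y j) ^ 2) ∧
      ∃ y : ℝ, ∀ j, x j = max (a j) (min (b j) y) := by
  haveI : Nonempty (Fin J) := ⟨⟨0, hJ⟩⟩
  set f : ℝ → ℝ := fun y => ∑ j, c j * max (a j) (min (b j) y) with hf_def
  have hf : Continuous f := by
    apply continuous_finset_sum
    intro j _
    exact continuous_const.mul
      (continuous_const.max (continuous_const.min continuous_id))
  set y₀ : ℝ := Finset.univ.inf' Finset.univ_nonempty a with hy₀
  set y₁ : ℝ := Finset.univ.sup' Finset.univ_nonempty b with hy₁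
  have hy01 : y₀ ≤ y₁ := by
    obtain ⟨j⟩ := (inferInstance : Nonempty (Fin J))
    calc y₀ ≤ a j := Finset.inf'_le _ (Finset.mem_univ j)
      _ ≤ b j := hab j
      _ ≤ y₁ := Finset.le_sup' _ (Finset.mem_univ j)
  have hfy₀ : f y₀ = ∑ j, c j * a j := by
    apply Finset.sum_congr rfl
    intro j _
    have h1 : y₀ ≤ a j := Finset.inf'_le _ (Finset.mem_univ j)
    rw [min_eq_right (h1.trans (hab j)), max_eq_left h1]
  have hfy₁ : f y₁ = ∑ j, c j * b j := by
    apply Finset.sum_congr rfl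
    intro j _
    have h1 : b j ≤ y₁ := Finset.le_sup' _ (Finset.mem_univ j)
    rw [min_eq_left h1, max_eq_right (hab j)]
  have hmem : d ∈ Set.Icc (f y₀) (f y₁) := by
    rw [hfy₀, hfy₁]; exact ⟨hd₁, hd₂⟩
  obtain ⟨y, -, hy⟩ := intermediate_value_Icc hy01 hf.continuousOn hmem
  refine ⟨fun j => max (a j) (min (b j) y), ⟨hy, ?_⟩, ?_, y, fun j => rfl⟩
  · intro j
    refine ⟨le_max_left _ _, max_le (hab j) (min_le_left _ _)⟩
  · intro z ⟨hz_sum, hz_box⟩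
    set x : Fin J → ℝ := fun j => max (a j) (min (b j) y) with hx_def
    have hid : ∀ j : Fin J, c j * (z j) ^ 2 =
        c j * (x j) ^ 2 + c j * ((z j - x j) ^ 2 + 2 * (x j - y) * (z j - x j))
          + c j * (2 * y * (z j - x j)) := by
      intro j; ring
    have hsum : ∑ j, c j * (z j) ^ 2 =
        ∑ j, c j * (x j) ^ 2
          + ∑ j, c j * ((z j - x j) ^ 2 + 2 * (x j - y) * (z j - x j))
          + ∑ j, c j * (2 * y * (z j - x j)) := by
      rw [← Finset.sum_add_distrib, ← Finset.sum_add_distrib]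
      exact Finset.sum_congr rfl fun j _ => hid j
    have h1 : 0 ≤ ∑ j, c j * ((z j - x j) ^ 2 + 2 * (x j - y) * (z j - x j)) := by
      apply Finset.sum_nonneg
      intro j _
      apply mul_nonneg (hc j).le
      have := pk_key (a j) (b j) y (z j) (hab j) (hz_box j).1 (hz_box j).2
      nlinarith [sq_nonneg (z j - x j)]
    have h2 : ∑ j, c j * (2 * y * (z j - x j)) = 0 := by
      have : ∑ j, c j * (2 * y * (z j - x j)) =
          2 * y * (∑ j, c j * z j - ∑ j, c j * x j) := by
        rw [← Finset.sum_sub_distrib, Finset.mul_sum]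
        exact Finset.sum_congr rfl fun j _ => by ring
      have hxd : ∑ j, c j * x j = d := hy
      rw [this, hz_sum, hxd]; ring
    linarith [hsum, h1, h2]
end
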